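/- Let η > 0, s ≥ 1, ω₀ = 1 + η/s², ω₁ = T_s(ω₀)/T_s'(ω₀), A_s(z) = T_s(ω₀ + ω₁ z)/T_s(ω₀), and let δ ∈ (0, η e^{-η}]. Then for all z ∈ [-2/ω₁, -δ], one has |A_s(z)| ≤ A_s(-δ) < 1. -/

import Mathlib

/-!
Write `ω₀ = cosh θ`. Then `T_s(ω₀) = cosh (sθ)` and `T_s'(ω₀) = s sinh (sθ) / sinh θ`, so
`ω₁ s² = s cosh (sθ) sinh θ / sinh (sθ)`. The elementary bounds `sinh x ≤ x cosh x`,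
`x cosh x ≤ (1 + x²/3) sinh x` and `1 + x²/2 ≤ cosh x` give `ω₁ s² ≤ e^η`, hence
`ω₁ δ ≤ η / s² = ω₀ - 1`, i.e. `ω₀ - ω₁ δ ∈ [1, ω₀)`. For `z ∈ [-2/ω₁, -δ]` the point
`ω₀ + ω₁ z` lies in `[-1, ω₀ - ω₁ δ]`, where `|T_s|` is bounded by `1` on `[-1, 1]` and `T_s` is
increasing on `[1, ∞)`.
-/

open Polynomial Polynomial.Chebyshev Set

theorem nonneg_of_hasDerivAt_of_map_zero {f f' : ℝ → ℝ} (hf : ∀ x, HasDerivAt f (f' x) x)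
    (h0 : f 0 = 0) (hf' : ∀ x, 0 < x → 0 ≤ f' x) {x : ℝ} (hx : 0 ≤ x) : 0 ≤ f x := by
  have hmono : MonotoneOn f (Ici 0) :=
    monotoneOn_of_hasDerivWithinAt_nonneg (convex_Ici 0)
      (continuous_iff_continuousAt.2 fun y => (hf y).continuousAt).continuousOn
      (fun y _ => (hf y).hasDerivWithinAt) (fun y hy => hf' y (by simpa using hy))
  simpa [h0] using hmono self_mem_Ici hx hx

namespace Real

theorem sinh_le_mul_cosh {x : ℝ} (hx : 0 ≤ x) : sinh x ≤ x * cosh x := by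
  have := nonneg_of_hasDerivAt_of_map_zero (f := fun x => x * cosh x - sinh x)
    (f' := fun x => x * sinh x)
    (fun y => by
      refine (((hasDerivAt_id' y).mul (hasDerivAt_cosh y)).sub (hasDerivAt_sinh y)).congr_deriv ?_
      ring)
    (by simp) (fun y hy => mul_nonneg hy.le (sinh_nonneg_iff.2 hy.le)) hx
  linarith

theorem mul_cosh_le_mul_sinh {x : ℝ} (hx : 0 ≤ x) : x * cosh x ≤ (1 + x ^ 2 / 3) * sinh x := by
  have := nonneg_of_hasDerivAt_of_map_zero
    (f := fun x => (1 + x ^ 2 / 3) * sinh x - x * cosh x)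
    (f' := fun x => x / 3 * (x * cosh x - sinh x))
    (fun y => by
      refine ((((hasDerivAt_pow 2 y).div_const 3).const_add 1).mul (hasDerivAt_sinh y)).sub
        ((hasDerivAt_id' y).mul (hasDerivAt_cosh y)) |>.congr_deriv ?_
      ring)
    (by simp) (fun y hy => mul_nonneg (by positivity) (by linarith [sinh_le_mul_cosh hy.le])) hx
  linarith

theorem one_add_sq_div_two_le_cosh (x : ℝ) : 1 + x ^ 2 / 2 ≤ cosh x := by
  have := nonneg_of_hasDerivAt_of_map_zero (f := fun x => cosh x - (1 + x ^ 2 / 2))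
    (f' := fun x => sinh x - x)
    (fun y => by
      refine (hasDerivAt_cosh y).sub (((hasDerivAt_pow 2 y).div_const 2).const_add 1)
        |>.congr_deriv ?_
      ring)
    (by simp) (fun y hy => by linarith [self_le_sinh_iff.2 hy.le]) (abs_nonneg x)
  simp only [cosh_abs, sq_abs] at this
  linarith

theorem natCast_mul_cosh_mul_sinh_div_sinh_le_exp {n : ℕ} (hn : 1 ≤ n) {θ : ℝ} (hθ : 0 < θ) :
    n * cosh (n * θ) * sinh θ / sinh (n * θ) ≤ exp (n ^ 2 * (cosh θ - 1)) := by
  rcases hn.eq_or_lt with rfl | hn2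
  · rw [Nat.cast_one, one_mul, one_mul, mul_div_assoc,
      div_self (sinh_pos_iff.2 hθ).ne', mul_one, one_pow, one_mul]
    linarith [add_one_le_exp (cosh θ - 1)]
  set u := (n : ℝ) * θ
  set η := (n : ℝ) ^ 2 * (cosh θ - 1)
  have hu0 : 0 < u := by positivity
  have hsinh_u : 0 < sinh u := sinh_pos_iff.2 hu0
  have hn4 : (4 : ℝ) ≤ n ^ 2 := by
    have : (2 : ℝ) ≤ n := by exact_mod_cast hn2
    nlinarith
  have hcosh_θ : cosh θ ≤ exp (η / 4) := by
    have : cosh θ - 1 ≤ η / 4 := by nlinarith [one_le_cosh θ]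
    linarith [add_one_le_exp (η / 4)]
  have hu_sq : 1 + u ^ 2 / 3 ≤ exp (2 * η / 3) := by
    have : u ^ 2 ≤ 2 * η := by nlinarith [one_add_sq_div_two_le_cosh θ]
    linarith [add_one_le_exp (2 * η / 3)]
  calc n * cosh u * sinh θ / sinh u
      ≤ n * cosh u * (θ * cosh θ) / sinh u := by gcongr; exact sinh_le_mul_cosh hθ.le
    _ = cosh θ * (u * cosh u / sinh u) := by ring
    _ ≤ cosh θ * (1 + u ^ 2 / 3) := by
        gcongr
        exact (div_le_iff₀ hsinh_u).2 (mul_cosh_le_mul_sinh hu0.le)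
    _ ≤ exp (η / 4) * exp (2 * η / 3) := by gcongr
    _ ≤ exp η := by
        rw [← exp_add]
        gcongr
        nlinarith [one_le_cosh θ]

end Real

namespace Polynomial.Chebyshev

open Real

theorem monotoneOn_eval_T_real (n : ℤ) : MonotoneOn (T ℝ n).eval (Ici 1) := by
  intro x hx y hy hxy
  beta_reduce
  rw [← cosh_arcosh hx, ← cosh_arcosh hy, T_real_cosh, T_real_cosh, cosh_le_cosh, abs_mul,
    abs_mul, abs_of_nonneg (arcosh_nonneg hx), abs_of_nonneg (arcosh_nonneg hy)]
  gcongr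
  exact (arcosh_le_arcosh (by linarith [mem_Ici.1 hx]) (by linarith [mem_Ici.1 hy])).2 hxy

theorem strictMonoOn_eval_T_real {n : ℤ} (hn : n ≠ 0) : StrictMonoOn (T ℝ n).eval (Ici 1) := by
  intro x hx y hy hxy
  beta_reduce
  rw [← cosh_arcosh hx, ← cosh_arcosh hy, T_real_cosh, T_real_cosh, cosh_lt_cosh, abs_mul,
    abs_mul, abs_of_nonneg (arcosh_nonneg hx), abs_of_nonneg (arcosh_nonneg hy)]
  have : (0 : ℝ) < |(n : ℝ)| := abs_pos.2 (Int.cast_ne_zero.2 hn)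
  gcongr
  exact (arcosh_lt_arcosh (by linarith [mem_Ici.1 hx]) (by linarith [mem_Ici.1 hy])).2 hxy

theorem abs_eval_T_real_le_eval (n : ℤ) {x y : ℝ} (hy : 1 ≤ y) (hx : x ∈ Icc (-1) y) :
    |(T ℝ n).eval x| ≤ (T ℝ n).eval y := by
  rcases le_total x 1 with hx1 | hx1
  · exact (abs_eval_T_real_le_one n (abs_le.2 ⟨hx.1, hx1⟩)).trans (one_le_eval_T_real n hy)
  · rw [abs_of_nonneg (zero_le_one.trans (one_le_eval_T_real n hx1))]
    exact monotoneOn_eval_T_real n hx1 hy hx.2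

theorem eval_derivative_T_real_cosh (n : ℤ) (θ : ℝ) :
    (derivative (T ℝ n)).eval (cosh θ) * sinh θ = n * sinh (n * θ) := by
  rw [T_derivative_eq_U, eval_mul, eval_intCast, mul_assoc, U_real_cosh]
  push_cast
  ring_nf

theorem eval_derivative_T_real_pos {n : ℤ} (hn : 0 < n) {x : ℝ} (hx : 1 < x) :
    0 < (derivative (T ℝ n)).eval x := by
  have hθ : 0 < arcosh x := arcosh_pos hx
  have key := eval_derivative_T_real_cosh n (arcosh x)
  rw [cosh_arcosh hx.le] at key
  have hn' : (0 : ℝ) < n := Int.cast_pos.2 hn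
  have : 0 < (derivative (T ℝ n)).eval x * sinh (arcosh x) := by
    rw [key]; exact mul_pos hn' (sinh_pos_iff.2 (mul_pos hn' hθ))
  exact pos_of_mul_pos_left this (sinh_pos_iff.2 hθ).le

theorem eval_T_div_eval_derivative_T_mul_sq_le_exp {n : ℕ} (hn : 1 ≤ n) {x : ℝ} (hx : 1 < x) :
    (T ℝ n).eval x / (derivative (T ℝ n)).eval x * n ^ 2 ≤ exp (n ^ 2 * (x - 1)) := by
  have hθ : 0 < arcosh x := arcosh_pos hx
  have hsinh : 0 < sinh (arcosh x) := sinh_pos_iff.2 hθ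
  have hderiv := eval_derivative_T_real_cosh n (arcosh x)
  rw [← cosh_arcosh hx.le, T_real_cosh, eq_div_of_mul_eq hsinh.ne' hderiv]
  push_cast
  convert Real.natCast_mul_cosh_mul_sinh_div_sinh_le_exp hn hθ using 1
  have : (0 : ℝ) < n := by exact_mod_cast hn
  have : sinh (n * arcosh x) ≠ 0 := (sinh_pos_iff.2 (by positivity)).ne'
  field_simp

end Polynomial.Chebyshev

/-- Let `η > 0`, `s ≥ 1`, `ω₀ = 1 + η/s²`, `ω₁ = T_s(ω₀)/T_s'(ω₀)`,
`A_s(z) = T_s(ω₀ + ω₁ z)/T_s(ω₀)`, and `δ ∈ (0, η e^{-η}]`. Then for all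
`z ∈ [-2/ω₁, -δ]`, `|A_s(z)| ≤ A_s(-δ) < 1`. -/
theorem damping_bound (η : ℝ) (hη : 0 < η) (s : ℕ) (hs : 1 ≤ s)
    (ω₀ ω₁ : ℝ) (hω₀ : ω₀ = 1 + η / (s : ℝ) ^ 2)
    (hω₁ : ω₁ = (Chebyshev.T ℝ (s : ℤ)).eval ω₀
      / ((Polynomial.derivative (Chebyshev.T ℝ (s : ℤ))).eval ω₀))
    (A : ℝ → ℝ)
    (hA : ∀ z : ℝ, A z = (Chebyshev.T ℝ (s : ℤ)).eval (ω₀ + ω₁ * z)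
      / (Chebyshev.T ℝ (s : ℤ)).eval ω₀)
    (δ : ℝ) (hδ : δ ∈ Set.Ioc 0 (η * Real.exp (-η))) :
    ∀ z ∈ Set.Icc (-(2 / ω₁)) (-δ), |A z| ≤ A (-δ) ∧ A (-δ) < 1 := by
  have hs_pos : (0 : ℝ) < s := by exact_mod_cast hs
  have hη_eq : (s : ℝ) ^ 2 * (ω₀ - 1) = η := by rw [hω₀]; field_simp; ring
  have hω₀_gt : 1 < ω₀ := by rw [hω₀]; linarith [show 0 < η / (s : ℝ) ^ 2 by positivity]
  have hT_pos : 0 < (T ℝ s).eval ω₀ := zero_lt_one.trans_le (one_le_eval_T_real _ hω₀_gt.le)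
  have hω₁_pos : 0 < ω₁ :=
    hω₁ ▸ div_pos hT_pos (eval_derivative_T_real_pos (by exact_mod_cast hs) hω₀_gt)
  have hω₁δ : ω₁ * δ ≤ ω₀ - 1 := by
    have key := eval_T_div_eval_derivative_T_mul_sq_le_exp hs hω₀_gt
    rw [← hω₁, hη_eq] at key
    refine le_of_mul_le_mul_left ?_ (pow_pos hs_pos 2)
    calc (s : ℝ) ^ 2 * (ω₁ * δ) = ω₁ * s ^ 2 * δ := by ring
      _ ≤ Real.exp η * (η * Real.exp (-η)) := mul_le_mul key hδ.2 hδ.1.le (Real.exp_pos η).le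
      _ = (s : ℝ) ^ 2 * (ω₀ - 1) := by rw [Real.exp_neg, hη_eq]; field_simp
  have hd_ge : 1 ≤ ω₀ + ω₁ * -δ := by linarith
  have hd_lt : ω₀ + ω₁ * -δ < ω₀ := by nlinarith [hδ.1]
  intro z hz
  constructor
  · rw [hA, hA, abs_div, abs_of_pos hT_pos]
    gcongr
    refine abs_eval_T_real_le_eval _ hd_ge ⟨?_, by gcongr; exact hz.2⟩
    have := mul_le_mul_of_nonneg_left hz.1 hω₁_pos.le
    rw [mul_neg, mul_div_cancel₀ _ hω₁_pos.ne'] at this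
    linarith
  · rw [hA, div_lt_one hT_pos]
    exact strictMonoOn_eval_T_real (by exact_mod_cast (by omega : s ≠ 0)) hd_ge hω₀_gt.le hd_lt
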